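/- arXiv:2301.06085 — 2 statements merged into one kernel-verified Lean document; each statement's English description precedes it below -/
import Mathlib

section
/- Under TP-2 observation distributions, the expected posterior belief given that observations are drawn from the state-1 distribution is at least the prior: Σ_o f(o|1)·b^o ≥ b for every prior b ∈ [0,1]. -/
/-- The Bayesian posterior on the hidden state being 1 given prior `b` and observation `o`. -/
noncomputable def post {O : Type} (f0 f1 : O → ℝ) (b : ℝ) (o : O) : ℝ :=
  b * f1 o / (b * f1 o + (1 - b) * f0 o)

/-- Under TP-2 observation distributions, the expected posterior belief under the
state-1 observation distribution is at least the prior: `Σ_o f(o|1)·b^o ≥ b`. -/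
theorem expected_posterior_dominates_prior
    {O : Type} [Fintype O] [LinearOrder O]
    (f0 f1 : O → ℝ)
    (hf0 : ∀ o, 0 ≤ f0 o) (hf1 : ∀ o, 0 ≤ f1 o)
    (hs0 : ∑ o, f0 o = 1) (hs1 : ∑ o, f1 o = 1)
    (tp2 : ∀ o o', o ≤ o' → f0 o' * f1 o ≤ f0 o * f1 o')
    (b : ℝ) (hb0 : 0 ≤ b) (hb1 : b ≤ 1)
    (hden : ∀ o, 0 < b * f1 o + (1 - b) * f0 o) :
    b ≤ ∑ o, f1 o * post f0 f1 b o := by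
  set d : O → ℝ := fun o => b * f1 o + (1 - b) * f0 o with hd
  have hsd : ∑ o, d o = 1 := by
    simp only [hd, Finset.sum_add_distrib, ← Finset.mul_sum, hs0, hs1]
    ring
  -- Cauchy-Schwarz: 1 = (∑ f1)² = (∑ (f1/√d)·√d)² ≤ (∑ f1²/d)·(∑ d) = ∑ f1²/d
  have key : 1 ≤ ∑ o, f1 o ^ 2 / d o := by
    have hcs := Finset.sum_mul_sq_le_sq_mul_sq Finset.univ
      (fun o => f1 o / Real.sqrt (d o)) (fun o => Real.sqrt (d o))
    have h1 : ∀ o : O, f1 o / Real.sqrt (d o) * Real.sqrt (d o) = f1 o := by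
      intro o
      exact div_mul_cancel₀ _ (Real.sqrt_ne_zero'.mpr (hden o))
    have h2 : ∀ o : O, (f1 o / Real.sqrt (d o)) ^ 2 = f1 o ^ 2 / d o := by
      intro o
      rw [div_pow, Real.sq_sqrt (hden o).le]
    have h3 : ∀ o : O, Real.sqrt (d o) ^ 2 = d o := fun o => Real.sq_sqrt (hden o).le
    simp only [h1, h2, h3, hs1, hsd, one_pow, mul_one] at hcs
    exact hcs
  have heq : ∑ o, f1 o * post f0 f1 b o = b * ∑ o, f1 o ^ 2 / d o := by
    rw [Finset.mul_sum]
    apply Finset.sum_congr rfl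
    intro o _
    simp only [post, hd]
    field_simp
  rw [heq]
  calc b = b * 1 := (mul_one b).symm
    _ ≤ b * ∑ o, f1 o ^ 2 / d o := by
        exact mul_le_mul_of_nonneg_left key hb0
end

section
/- In the stopping game with the stated reward function, the pure strategy pair (π̄_D, π̄_A), where π̄_D continues iff b(1)=0 and stops iff b(1)>0, and π̄_A continues in state 0 and stops in state 1 (for all beliefs), is a Nash equilibrium whenever the state is 0 if and only if the belief b(1) equals 0. In particular each of π̄_D, π̄_A is a best response to the other, and the equilibrium value is 0. -/
/-- Transition probabilities of the stopping game under the assumption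
`s = 0 ⟺ b(1) = 0` (perfect state information). States: `0` = no intrusion,
`1` = intrusion, `2` = terminal `∅`. `aD`/`aA` are the stop indicators of the
defender and attacker, `l` the number of defender stops remaining, and `φ l` the
probability that previous stop actions end the intrusion. -/
noncomputable def stopT (φ : ℕ → ℝ) (s : Fin 3) (aD aA : Bool) (l : ℕ) (s' : Fin 3) : ℝ :=
  if s = 2 then (if s' = 2 then 1 else 0)
  else if aD = true ∧ l ≤ 1 then (if s' = 2 then 1 else 0)
  else if s = 0 then
    (if aA then (if s' = 1 then 1 else 0) else (if s' = 0 then 1 else 0))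
  else
    (if aA then (if s' = 2 then 1 else 0)
     else if s' = 2 then φ l else if s' = 1 then 1 - φ l else 0)

/-- Reward function of the stopping game: `R(∅,·)=0`, `R(1,(·,S))=0`,
`R(0,(C,·))=0`, `R(0,(S,·))=R_cost/l`, `R(1,(S,C))=R_st/l`, `R(1,(C,C))=R_int`. -/
noncomputable def stopR (Rst Rcost Rint : ℝ) (s : Fin 3) (aD aA : Bool) (l : ℕ) : ℝ :=
  if s = 2 then 0
  else if s = 1 ∧ aA = true then 0
  else if s = 0 then (if aD then Rcost / (l : ℝ) else 0)
  else (if aD then Rst / (l : ℝ) else Rint)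

/-- Theorem 1.A (pure equilibrium construction): when the belief perfectly reveals
the state (`s = 0 ⟺ b(1) = 0`), the pure strategy pair where the defender
continues iff no intrusion occurs and stops iff one does (`b(1) > 0`, i.e.
`s = 1`), and the attacker continues in state 0 and stops in state 1, is a Nash
equilibrium of the stopping game, with equilibrium value 0. Here
`V d a s l` denotes the defender's expected discounted reward of the stationary
pure strategy pair `(d, a)` from state `s` with `l` stops remaining, characterized
by its Bellman recursion. -/
theorem pure_equilibrium_of_perfect_belief
    (γ Rst Rcost Rint : ℝ) (hγ0 : 0 ≤ γ) (hγ1 : γ < 1)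
    (hst : 0 < Rst) (hcost : Rcost < 0) (hint : Rint < 0)
    (φ : ℕ → ℝ) (hφ : ∀ l, 0 ≤ φ l ∧ φ l ≤ 1)
    (L : ℕ) (hL : 1 ≤ L)
    (V : (Fin 3 → ℕ → Bool) → (Fin 3 → ℕ → Bool) → Fin 3 → ℕ → ℝ)
    (hV : ∀ d a s l, V d a s l =
      stopR Rst Rcost Rint s (d s l) (a s l) l +
        γ * ∑ s', stopT φ s (d s l) (a s l) l s' *
          V d a s' (l - (if d s l then 1 else 0))) :
    V (fun s _ => decide (s = 1)) (fun s _ => decide (s = 1)) 0 L = 0 ∧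
    (∀ d, V d (fun s _ => decide (s = 1)) 0 L ≤
      V (fun s _ => decide (s = 1)) (fun s _ => decide (s = 1)) 0 L) ∧
    (∀ a, V (fun s _ => decide (s = 1)) (fun s _ => decide (s = 1)) 0 L ≤
      V (fun s _ => decide (s = 1)) a 0 L) := by
  have fix : ∀ x : ℝ, x = γ * x → x = 0 := by
    intro x h
    have h2 : (1 - γ) * x = 0 := by ring_nf; linarith
    rcases mul_eq_zero.mp h2 with h3 | h3
    · linarith
    · exact h3
  -- state 2 has value 0 for all strategies
  have h2 : ∀ d a l, V d a 2 l = 0 := by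
    intro d a l
    induction l using Nat.strong_induction_on with
    | _ l ih =>
      have h := hV d a 2 l
      simp [stopR, stopT, Fin.sum_univ_three] at h
      by_cases hd : d 2 l = true
      · rcases l with _ | n
        · simp [hd] at h; exact fix _ h
        · simp [hd] at h
          rw [ih n (Nat.lt_succ_self n)] at h
          simpa using h
      · simp [hd] at h; exact fix _ h
  -- equilibrium value at state 0 is 0
  have heq : ∀ l, V (fun s _ => decide (s = 1)) (fun s _ => decide (s = 1)) 0 l = 0 := by
    intro l
    have h := hV (fun s _ => decide (s = 1)) (fun s _ => decide (s = 1)) 0 l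
    simp [stopR, stopT, Fin.sum_univ_three] at h
    exact fix _ h
  -- defender deviation: value ≤ 0
  have hdev : ∀ d l, V d (fun s _ => decide (s = 1)) 0 l ≤ 0 := by
    intro d l
    induction l with
    | zero =>
      have h := hV d (fun s _ => decide (s = 1)) 0 0
      simp [stopR, stopT, Fin.sum_univ_three] at h
      by_cases hd : d 0 0 = true
      · simp [hd, h2] at h; simp [h]
      · simp [hd] at h; rw [fix _ h]
    | succ n ih =>
      have h := hV d (fun s _ => decide (s = 1)) 0 (n + 1)
      simp [stopR, stopT, Fin.sum_univ_three] at h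
      by_cases hd : d 0 (n + 1) = true
      · simp [hd] at h
        rcases n with _ | m
        · simp [h2] at h
          rw [h]; linarith
        · simp [h2] at h
          rw [h]
          have hneg : Rcost / ((m : ℝ) + 1 + 1) < 0 := by
            apply div_neg_of_neg_of_pos hcost
            positivity
          nlinarith [mul_nonneg hγ0 (neg_nonneg.mpr ih)]
      · simp [hd] at h; rw [fix _ h]
    -- attacker deviation at state 1: value ≥ 0
  have hatt1 : ∀ a l, 0 ≤ V (fun s _ => decide (s = 1)) a 1 l := by
    intro a l
    induction l with
    | zero =>
      have h := hV (fun s _ => decide (s = 1)) a 1 0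
      simp [stopR, stopT, Fin.sum_univ_three, h2] at h
      simp [h]
    | succ n ih =>
      have h := hV (fun s _ => decide (s = 1)) a 1 (n + 1)
      simp [stopR, stopT, Fin.sum_univ_three, h2] at h
      by_cases ha : a 1 (n + 1) = true
      · simp [ha] at h; simp [h]
      · simp [ha] at h
        rcases n with _ | m
        · simp [h2] at h
          rw [h]; positivity
        · simp [h2] at h
          rw [h]
          have h1 : 0 ≤ Rst / ((m : ℝ) + 1 + 1) := by positivity
          have h2' : 0 ≤ 1 - φ (m + 1 + 1) := by linarith [(hφ (m + 1 + 1)).2]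
          nlinarith [mul_nonneg (mul_nonneg hγ0 h2') ih]
  -- attacker deviation at state 0: value ≥ 0
  have hatt : ∀ a l, 0 ≤ V (fun s _ => decide (s = 1)) a 0 l := by
    intro a l
    have h := hV (fun s _ => decide (s = 1)) a 0 l
    simp [stopR, stopT, Fin.sum_univ_three] at h
    by_cases ha : a 0 l = true
    · simp [ha] at h
      rw [h]
      exact mul_nonneg hγ0 (hatt1 a l)
    · simp [ha] at h
      rw [fix _ h]
  refine ⟨heq L, fun d => ?_, fun a => ?_⟩
  · rw [heq L]; exact hdev d L
  · rw [heq L]; exact hatt a L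
end
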